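/- For Re z > 0 and Re ν > 0, the terminant function has the Laplace integral representation T_ν(z) = (e^{−z}/(2π)) ∫_0^∞ e^{−zt} t^{ν−1}/(1+t) dt. -/

import Mathlib

/-!
For `Re w > 0` one has `Γ(ν) w^{-ν} = ∫_0^∞ s^{ν-1} e^{-ws} ds`: for real `w` this is Euler's
integral after a change of scale, and both sides are holomorphic in `w`, so the identity theorem
extends it to the right half-plane. Inserting it with `w = z + t` into
`Γ(1-ν, z) = ∫_0^∞ (z+t)^{-ν} e^{-(z+t)} dt` gives an absolutely convergent double integral;
after swapping the order of integration, the `t`-integral is `∫_0^∞ e^{-(1+s)t} dt = 1/(1+s)`.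
-/

open Complex Real

/-- The upper incomplete gamma function `Γ(a, z) = ∫_z^∞ t^{a−1} e^{−t} dt`
(integral along the horizontal ray from `z`, valid for `Re z > 0`). -/
noncomputable def upperGamma (a z : ℂ) : ℂ :=
  ∫ t in Set.Ioi (0 : ℝ), (z + t) ^ (a - 1) * Complex.exp (-(z + t))

/-- The terminant function `T_ν(z) = (Γ(ν)/(2π)) Γ(1−ν, z)`. -/
noncomputable def terminant (ν z : ℂ) : ℂ :=
  Complex.Gamma ν / (2 * Real.pi) * upperGamma (1 - ν) z

open MeasureTheory Set Filter Topology

lemma norm_ofReal_cpow_mul_cexp_neg_mul (ν w : ℂ) {s : ℝ} (hs : 0 < s) :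
    ‖(s : ℂ) ^ (ν - 1) * cexp (-(w * s))‖ = s ^ (ν.re - 1) * rexp (-(w.re * s)) := by
  rw [norm_mul, norm_exp, norm_cpow_eq_rpow_re_of_pos hs]
  simp

lemma integrableOn_rpow_mul_exp_neg_mul_Ioi {a c : ℝ} (ha : -1 < a) (hc : 0 < c) :
    IntegrableOn (fun s : ℝ => s ^ a * rexp (-(c * s))) (Ioi 0) := by
  simpa using integrableOn_rpow_mul_exp_neg_mul_rpow ha zero_lt_one hc

lemma integrableOn_cpow_mul_cexp_neg_mul_Ioi {ν w : ℂ} (hν : 0 < ν.re) (hw : 0 < w.re) :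
    IntegrableOn (fun s : ℝ => (s : ℂ) ^ (ν - 1) * cexp (-(w * s))) (Ioi 0) := by
  refine (integrableOn_rpow_mul_exp_neg_mul_Ioi (a := ν.re - 1) (by linarith) hw).mono'
    (by fun_prop) ?_
  filter_upwards [ae_restrict_mem measurableSet_Ioi] with s hs
  rw [norm_ofReal_cpow_mul_cexp_neg_mul ν w hs]

lemma differentiableAt_integral_cpow_mul_cexp_neg_mul_Ioi {ν w : ℂ} (hν : 0 < ν.re)
    (hw : 0 < w.re) :
    DifferentiableAt ℂ
      (fun u : ℂ => ∫ s in Ioi (0 : ℝ), (s : ℂ) ^ (ν - 1) * cexp (-(u * s))) w := by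
  have hbound : ∀ᵐ (s : ℝ) ∂volume.restrict (Ioi 0), ∀ u ∈ Metric.ball w (w.re / 2),
      ‖(s : ℂ) ^ (ν - 1) * (cexp (-(u * s)) * -s)‖ ≤ s ^ ν.re * rexp (-(w.re / 2 * s)) := by
    filter_upwards [ae_restrict_mem measurableSet_Ioi] with s (hs : 0 < s) u hu
    have hre : w.re / 2 ≤ u.re := by
      have := (abs_re_le_norm (u - w)).trans_lt (mem_ball_iff_norm.mp hu)
      rw [sub_re] at this
      linarith [(abs_lt.mp this).1]
    calc ‖(s : ℂ) ^ (ν - 1) * (cexp (-(u * s)) * -s)‖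
        = s ^ (ν.re - 1) * s * rexp (-(u.re * s)) := by
          rw [← mul_assoc, norm_mul, norm_ofReal_cpow_mul_cexp_neg_mul ν u hs, norm_neg,
            norm_real, Real.norm_of_nonneg hs.le]
          ring
      _ ≤ s ^ ν.re * rexp (-(w.re / 2 * s)) := by
          rw [← rpow_add_one hs.ne', sub_add_cancel]
          gcongr
  have hderiv : ∀ᵐ (s : ℝ) ∂volume.restrict (Ioi 0), ∀ u ∈ Metric.ball w (w.re / 2),
      HasDerivAt (fun u : ℂ => (s : ℂ) ^ (ν - 1) * cexp (-(u * s)))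
        ((s : ℂ) ^ (ν - 1) * (cexp (-(u * s)) * -s)) u :=
    Eventually.of_forall fun s u _ => ((hasDerivAt_mul_const (s : ℂ)).neg.cexp).const_mul _
  exact (hasDerivAt_integral_of_dominated_loc_of_deriv_le
    (F := fun u (s : ℝ) => (s : ℂ) ^ (ν - 1) * cexp (-(u * s)))
    (Metric.ball_mem_nhds w (half_pos hw)) (Eventually.of_forall fun u => by fun_prop)
    (integrableOn_cpow_mul_cexp_neg_mul_Ioi hν hw) (by fun_prop) hbound
    (integrableOn_rpow_mul_exp_neg_mul_Ioi (a := ν.re) (by linarith) (half_pos hw))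
    hderiv).2.differentiableAt

lemma AnalyticOnNhd.eqOn_re_pos_of_eq_ofReal {E : Type*} [NormedAddCommGroup E]
    [NormedSpace ℂ E] {f g : ℂ → E} (hf : AnalyticOnNhd ℂ f {w | 0 < w.re})
    (hg : AnalyticOnNhd ℂ g {w | 0 < w.re})
    (hfg : ∀ r : ℝ, 0 < r → f r = g r) : EqOn f g {w | 0 < w.re} := by
  have hofReal : Tendsto ((↑) : ℝ → ℂ) (𝓝[>] 1) (𝓝[≠] 1) :=
    tendsto_nhdsWithin_of_tendsto_nhds_of_eventually_within _
      (continuous_ofReal.tendsto 1 |>.mono_left nhdsWithin_le_nhds) <|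
      eventually_nhdsWithin_of_forall fun r (hr : 1 < r) => by simpa using hr.ne'
  refine hf.eqOn_of_preconnected_of_frequently_eq hg (convex_halfSpace_re_gt 0).isPreconnected
    (by simp) (hofReal.frequently (Eventually.frequently ?_))
  exact eventually_nhdsWithin_of_forall fun r (hr : 1 < r) => hfg r (by linarith)

theorem integral_cpow_mul_cexp_neg_mul_Ioi {ν w : ℂ} (hν : 0 < ν.re) (hw : 0 < w.re) :
    ∫ s in Ioi (0 : ℝ), (s : ℂ) ^ (ν - 1) * cexp (-(w * s)) = Gamma ν * w ^ (-ν) := by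
  have hopen : IsOpen {u : ℂ | 0 < u.re} := isOpen_lt continuous_const continuous_re
  refine AnalyticOnNhd.eqOn_re_pos_of_eq_ofReal
    (f := fun u => ∫ s in Ioi (0 : ℝ), (s : ℂ) ^ (ν - 1) * cexp (-(u * s)))
    (g := fun u => Gamma ν * u ^ (-ν)) ?_ ?_ (fun r hr => ?_) hw
  · refine DifferentiableOn.analyticOnNhd (fun u hu => ?_) hopen
    exact (differentiableAt_integral_cpow_mul_cexp_neg_mul_Ioi hν hu).differentiableWithinAt
  · refine DifferentiableOn.analyticOnNhd (fun u hu => ?_) hopen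
    exact ((differentiableAt_id.cpow_const (mem_slitPlane_iff.2 (Or.inl hu))).const_mul
      _).differentiableWithinAt
  · rw [Complex.integral_cpow_mul_exp_neg_mul_Ioi hν hr, mul_comm, one_div,
      inv_cpow _ _ (by simp [arg_ofReal_of_nonneg hr.le, pi_ne_zero.symm]), cpow_neg]

noncomputable def laplaceKernel (ν z : ℂ) (t s : ℝ) : ℂ :=
  (s : ℂ) ^ (ν - 1) * cexp (-((z + t) * s)) * cexp (-(z + t))

lemma integrable_laplaceKernel {ν z : ℂ} (hν : 0 < ν.re) (hz : 0 < z.re) :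
    Integrable (Function.uncurry (laplaceKernel ν z))
      ((volume.restrict (Ioi 0)).prod (volume.restrict (Ioi 0))) := by
  have hexp : Integrable (fun t : ℝ => rexp (-z.re) * rexp (-t)) (volume.restrict (Ioi 0)) := by
    simpa using (exp_neg_integrableOn_Ioi 0 one_pos).const_mul (rexp (-z.re))
  refine (hexp.mul_prod (integrableOn_rpow_mul_exp_neg_mul_Ioi (a := ν.re - 1) (by linarith)
    hz)).mono' (by unfold laplaceKernel; fun_prop) ?_
  rw [Measure.prod_restrict]
  filter_upwards [ae_restrict_mem (measurableSet_Ioi.prod measurableSet_Ioi)]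
    with ⟨t, s⟩ ⟨(ht : 0 < t), (hs : 0 < s)⟩
  simp only [Function.uncurry_apply_pair, laplaceKernel]
  rw [norm_mul, norm_ofReal_cpow_mul_cexp_neg_mul ν _ hs, norm_exp]
  simp only [add_re, ofReal_re, neg_re, neg_add, Real.exp_add]
  have hdecay : rexp (-((z.re + t) * s)) ≤ rexp (-(z.re * s)) := by gcongr; nlinarith
  calc _ ≤ s ^ (ν.re - 1) * rexp (-(z.re * s)) * (rexp (-z.re) * rexp (-t)) := by gcongr
    _ = _ := by ring

lemma integral_laplaceKernel_right {ν z : ℂ} (hν : 0 < ν.re) (hz : 0 < z.re) {t : ℝ}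
    (ht : 0 ≤ t) :
    ∫ s in Ioi (0 : ℝ), laplaceKernel ν z t s = Gamma ν * (z + t) ^ (-ν) * cexp (-(z + t)) := by
  rw [← integral_cpow_mul_cexp_neg_mul_Ioi hν (by rw [add_re, ofReal_re]; linarith),
    ← integral_mul_const]
  rfl

lemma integral_laplaceKernel_left (ν z : ℂ) {s : ℝ} (hs : 0 ≤ s) :
    ∫ t in Ioi (0 : ℝ), laplaceKernel ν z t s
      = cexp (-z) * (cexp (-z * s) * (s : ℂ) ^ (ν - 1) / (1 + s)) := by
  have hsplit : ∀ t : ℝ, laplaceKernel ν z t s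
      = cexp (-z) * cexp (-z * s) * (s : ℂ) ^ (ν - 1) * cexp (-(1 + s) * t) := by
    intro t
    have hexp : cexp (-((z + t) * s)) * cexp (-(z + t))
        = cexp (-z) * cexp (-z * s) * cexp (-(1 + s) * t) := by
      simp only [← Complex.exp_add]
      ring_nf
    rw [laplaceKernel]
    linear_combination (s : ℂ) ^ (ν - 1) * hexp
  simp_rw [hsplit, integral_const_mul]
  rw [integral_exp_mul_complex_Ioi (by rw [neg_re, add_re, one_re, ofReal_re]; linarith),
    ofReal_zero, mul_zero, Complex.exp_zero, neg_div_neg_eq]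
  ring

/-- For `Re z > 0` and `Re ν > 0`, the terminant has the Laplace integral
representation `T_ν(z) = (e^{−z}/(2π)) ∫_0^∞ e^{−zt} t^{ν−1}/(1+t) dt`. -/
theorem terminant_laplace (ν z : ℂ) (hz : 0 < z.re) (hν : 0 < ν.re) :
    terminant ν z = Complex.exp (-z) / (2 * Real.pi) *
      ∫ t in Set.Ioi (0 : ℝ),
        Complex.exp (-z * t) * (t : ℂ) ^ (ν - 1) / (1 + (t : ℂ)) := by
  have hΓ : Gamma ν * upperGamma (1 - ν) z
      = cexp (-z) * ∫ s in Ioi (0 : ℝ), cexp (-z * s) * (s : ℂ) ^ (ν - 1) / (1 + (s : ℂ)) :=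
    calc Gamma ν * upperGamma (1 - ν) z
        = ∫ t in Ioi (0 : ℝ), ∫ s in Ioi (0 : ℝ), laplaceKernel ν z t s := by
          rw [upperGamma, ← integral_const_mul]
          refine setIntegral_congr_fun measurableSet_Ioi fun t (ht : 0 < t) => ?_
          rw [integral_laplaceKernel_right hν hz ht.le, sub_sub_cancel_left, mul_assoc]
      _ = ∫ s in Ioi (0 : ℝ), ∫ t in Ioi (0 : ℝ), laplaceKernel ν z t s :=
          integral_integral_swap (integrable_laplaceKernel hν hz)
      _ = _ := by
          rw [← integral_const_mul]
          exact setIntegral_congr_fun measurableSet_Ioi fun s (hs : 0 < s) =>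
            integral_laplaceKernel_left ν z hs.le
  rw [terminant, div_mul_eq_mul_div, hΓ, ← div_mul_eq_mul_div]
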